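/- arXiv:2212.03157 — 5 statements merged into one kernel-verified Lean document; each statement's English description precedes it below -/
import Mathlib

section
/- Suppose the pair (A, B) of real matrices, A ∈ ℝ^{n×n}, B ∈ ℝ^{n×m}, satisfies the Kalman rank condition: the matrix [B, AB, A²B, …, A^{n-1}B] has rank n. Then for every ξ ∈ ℂ, ker(Aᵀ − ξ I) ∩ ker(Bᵀ) = {0} (the Hautus condition), where the kernels are taken over ℂⁿ after complexification. -/
open Matrix

/-- **Kalman rank condition implies the Hautus condition.**
If the Kalman matrix `[B, AB, …, A^{n-1}B]` (here encoded with columns indexed by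
`Fin n × Fin m`, column `(k,j)` being the `j`-th column of `A^k B`) has rank `n`,
then for every `ξ ∈ ℂ`, `ker(Aᵀ − ξ I) ∩ ker(Bᵀ) = {0}` after complexification. -/
theorem kalman_implies_hautus
    {n m : ℕ} (A : Matrix (Fin n) (Fin n) ℝ) (B : Matrix (Fin n) (Fin m) ℝ)
    (hKalman : Matrix.rank (Matrix.of fun (i : Fin n) (kj : Fin n × Fin m) =>
        ((A ^ (kj.1 : ℕ)) * B) i kj.2) = n) :
    ∀ ξ : ℂ, ∀ z : Fin n → ℂ,
      (A.map (Complex.ofReal ·))ᵀ *ᵥ z = ξ • z →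
      (B.map (Complex.ofReal ·))ᵀ *ᵥ z = 0 →
      z = 0 := by
  intro ξ z hA hB
  -- Step 1: eigen equation for powers
  have h1 : ∀ k : ℕ, ((A ^ k).map (Complex.ofReal ·))ᵀ *ᵥ z = ξ ^ k • z := by
    intro k
    induction k with
    | zero => simp [Matrix.map_one]
    | succ k ih =>
      have hmap : ((A ^ (k+1)).map (Complex.ofReal ·)) =
          ((A ^ k).map (Complex.ofReal ·)) * (A.map (Complex.ofReal ·)) := by
        rw [pow_succ]
        exact Matrix.map_mul (f := Complex.ofRealHom)
      rw [hmap, Matrix.transpose_mul, ← Matrix.mulVec_mulVec, ih, Matrix.mulVec_smul, hA,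
        smul_smul, pow_succ, mul_comm]
  -- Step 2: each column of the Kalman matrix pairs to zero with z
  have h2 : ∀ (k : Fin n) (j : Fin m), ∑ i, (((A ^ (k:ℕ)) * B) i j : ℂ) * z i = 0 := by
    intro k j
    have hmap : (((A ^ (k:ℕ)) * B).map (Complex.ofReal ·)) =
        ((A ^ (k:ℕ)).map (Complex.ofReal ·)) * (B.map (Complex.ofReal ·)) :=
      Matrix.map_mul (f := Complex.ofRealHom)
    have : (((A ^ (k:ℕ)) * B).map (Complex.ofReal ·))ᵀ *ᵥ z = 0 := by
      rw [hmap, Matrix.transpose_mul, ← Matrix.mulVec_mulVec, h1, Matrix.mulVec_smul, hB,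
        smul_zero]
    have := congrFun this j
    simpa [Matrix.mulVec, dotProduct, mul_comm] using this
  -- Step 3: columns span ℝⁿ
  set K : Matrix (Fin n) (Fin n × Fin m) ℝ :=
    Matrix.of fun (i : Fin n) (kj : Fin n × Fin m) => ((A ^ (kj.1 : ℕ)) * B) i kj.2 with hK
  have hspan : Submodule.span ℝ (Set.range Kᵀ) = ⊤ := by
    apply Submodule.eq_top_of_finrank_eq
    rw [show Set.range Kᵀ = Set.range K.col from rfl, ← Matrix.rank_eq_finrank_span_cols, hKalman]
    simp
  -- Step 4: the ℝ-linear functional v ↦ ∑ i, v i * z i vanishes on a spanning set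
  have h3 : ∀ v : Fin n → ℝ, ∑ i, (v i : ℂ) * z i = 0 := by
    intro v
    have hv : v ∈ Submodule.span ℝ (Set.range Kᵀ) := hspan ▸ Submodule.mem_top
    induction hv using Submodule.span_induction with
    | mem w hw =>
      obtain ⟨⟨k, j⟩, rfl⟩ := hw
      exact h2 k j
    | zero => simp
    | add a b _ _ ha hb => simp [add_mul, Finset.sum_add_distrib, ha, hb]
    | smul c a _ ha =>
      simp only [Pi.smul_apply, smul_eq_mul, Complex.ofReal_mul, mul_assoc,
        ← Finset.mul_sum, ha, mul_zero]
  funext i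
  have := h3 (Pi.single i 1)
  simpa [Pi.single_apply, apply_ite (Complex.ofReal), ite_mul, Finset.sum_ite_eq'] using this
end

section
/- Let A ∈ ℝ^{n×n}, B ∈ ℝ^{n×m} satisfy the Kalman rank condition, and let Q, R be real symmetric positive definite matrices of sizes n and m respectively. Then the Hamiltonian matrix M = [[A, B R⁻¹ Bᵀ], [Q, −Aᵀ]] ∈ ℝ^{2n×2n} has no purely imaginary eigenvalue (in particular no zero eigenvalue), i.e., every eigenvalue of M has nonzero real part. -/
open Matrix

private lemma re_quad {k : ℕ} (P : Matrix (Fin k) (Fin k) ℝ) (x : Fin k → ℂ) :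
    (star x ⬝ᵥ (P.map (Complex.ofReal ·)) *ᵥ x).re
      = (fun i => (x i).re) ⬝ᵥ P *ᵥ (fun i => (x i).re)
        + (fun i => (x i).im) ⬝ᵥ P *ᵥ (fun i => (x i).im) := by
  simp only [dotProduct, mulVec, Matrix.map_apply, Pi.star_apply, Finset.mul_sum,
    Complex.re_sum, ← Finset.sum_add_distrib]
  refine Finset.sum_congr rfl fun i _ => ?_
  refine Finset.sum_congr rfl fun j _ => ?_
  simp [Complex.mul_re]

private lemma re_quad_nonneg {k : ℕ} {P : Matrix (Fin k) (Fin k) ℝ} (hP : P.PosSemidef)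
    (x : Fin k → ℂ) : 0 ≤ (star x ⬝ᵥ (P.map (Complex.ofReal ·)) *ᵥ x).re := by
  rw [re_quad]
  have h1 := hP.dotProduct_mulVec_nonneg (fun i => (x i).re)
  have h2 := hP.dotProduct_mulVec_nonneg (fun i => (x i).im)
  simp only [star_trivial] at h1 h2
  linarith

private lemma re_quad_pos {k : ℕ} {P : Matrix (Fin k) (Fin k) ℝ} (hP : P.PosDef)
    {x : Fin k → ℂ} (hx : x ≠ 0) : 0 < (star x ⬝ᵥ (P.map (Complex.ofReal ·)) *ᵥ x).re := by
  rw [re_quad]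
  by_cases ha : (fun i => (x i).re) = 0
  · have hb : (fun i => (x i).im) ≠ 0 := by
      intro hb
      apply hx
      funext i
      have := congrFun ha i
      have := congrFun hb i
      exact Complex.ext (by simpa using congrFun ha i) (by simpa using congrFun hb i)
    have h2 := hP.dotProduct_mulVec_pos hb
    have h1 := (hP.posSemidef).dotProduct_mulVec_nonneg (fun i => (x i).re)
    simp only [star_trivial] at h1 h2
    linarith
  · have h1 := hP.dotProduct_mulVec_pos ha
    have h2 := (hP.posSemidef).dotProduct_mulVec_nonneg (fun i => (x i).im)
    simp only [star_trivial] at h1 h2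
    linarith

private lemma conjTranspose_map_real {k l : ℕ} (M : Matrix (Fin k) (Fin l) ℝ) :
    (M.map (⇑Complex.ofRealHom))ᴴ = Mᵀ.map (⇑Complex.ofRealHom) := by
  ext i j
  simp [Matrix.conjTranspose_apply, Matrix.map_apply, Complex.conj_ofReal]
/-- **The LQ Hamiltonian matrix is hyperbolic.**
If `(A,B)` satisfies the Kalman rank condition and `Q`, `R` are symmetric positive
definite, then the Hamiltonian matrix `M = [[A, BR⁻¹Bᵀ], [Q, −Aᵀ]]` has no purely
imaginary (in particular no zero) eigenvalue: every complex eigenvalue has nonzero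
real part. -/
theorem lq_hamiltonian_matrix_hyperbolic
    {n m : ℕ} (A : Matrix (Fin n) (Fin n) ℝ) (B : Matrix (Fin n) (Fin m) ℝ)
    (Q : Matrix (Fin n) (Fin n) ℝ) (R : Matrix (Fin m) (Fin m) ℝ)
    (hQ : Q.PosDef) (hR : R.PosDef)
    (hKalman : Matrix.rank (Matrix.of fun (i : Fin n) (kj : Fin n × Fin m) =>
        ((A ^ (kj.1 : ℕ)) * B) i kj.2) = n) :
    ∀ μ : ℂ, ∀ z : (Fin n ⊕ Fin n) → ℂ,
      ((Matrix.fromBlocks A (B * R⁻¹ * Bᵀ) Q (-Aᵀ)).map (Complex.ofReal ·)) *ᵥ z = μ • z →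
      z ≠ 0 →
      μ.re ≠ 0 := by
  intro μ z hM0 hz hre
  have hM : ((Matrix.fromBlocks A (B * R⁻¹ * Bᵀ) Q (-Aᵀ)).map (⇑Complex.ofRealHom)) *ᵥ z
      = μ • z := hM0
  clear hM0
  set z₁ : Fin n → ℂ := fun i => z (Sum.inl i) with hz₁
  set z₂ : Fin n → ℂ := fun i => z (Sum.inr i) with hz₂
  have hzelim : z = Sum.elim z₁ z₂ := by funext s; cases s <;> rfl
  set A' : Matrix (Fin n) (Fin n) ℂ := A.map (⇑Complex.ofRealHom) with hA'
  set B' : Matrix (Fin n) (Fin m) ℂ := B.map (⇑Complex.ofRealHom) with hB'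
  set Q' : Matrix (Fin n) (Fin n) ℂ := Q.map (⇑Complex.ofRealHom) with hQ'
  set Rinv' : Matrix (Fin m) (Fin m) ℂ := (R⁻¹).map (⇑Complex.ofRealHom) with hRinv'
  set S' : Matrix (Fin n) (Fin n) ℂ := (B * R⁻¹ * Bᵀ).map (⇑Complex.ofRealHom) with hS'
  have hneg : (-Aᵀ).map (⇑Complex.ofRealHom) = -(A'ᵀ) := by
    ext i j
    simp [hA', Matrix.map_apply]
  rw [Matrix.fromBlocks_map, hneg, hzelim, Matrix.fromBlocks_mulVec] at hM
  have h1 : A' *ᵥ z₁ + S' *ᵥ z₂ = μ • z₁ := by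
    funext i; exact congrFun hM (Sum.inl i)
  have h2 : Q' *ᵥ z₁ + (-(A'ᵀ)) *ᵥ z₂ = μ • z₂ := by
    funext i; exact congrFun hM (Sum.inr i)
  rw [Matrix.neg_mulVec, ← sub_eq_add_neg] at h2
  have h2' : Q' *ᵥ z₁ = μ • z₂ + A'ᵀ *ᵥ z₂ := eq_add_of_sub_eq h2
  have h1' : A' *ᵥ z₁ = μ • z₁ - S' *ᵥ z₂ := by rw [← h1]; abel
  -- hermitian facts
  have hRT : (R⁻¹)ᵀ = R⁻¹ := by
    rw [Matrix.transpose_nonsing_inv]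
    congr 1
    exact hR.1
  have hST : (B * R⁻¹ * Bᵀ)ᵀ = B * R⁻¹ * Bᵀ := by
    rw [Matrix.transpose_mul, Matrix.transpose_mul, Matrix.transpose_transpose, hRT,
      Matrix.mul_assoc]
  have hS'H : S'ᴴ = S' := by
    rw [hS', conjTranspose_map_real, hST]
  have hA'H : A'ᴴ = A'ᵀ := by
    rw [hA', conjTranspose_map_real, Matrix.transpose_map]
  have hB'H : B'ᴴ = B'ᵀ := by
    rw [hB', conjTranspose_map_real, Matrix.transpose_map]
  -- the key identity
  set p : ℂ := star z₁ ⬝ᵥ z₂ with hp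
  have hsA : star (A' *ᵥ z₁) ⬝ᵥ z₂ = star z₁ ⬝ᵥ (A'ᵀ *ᵥ z₂) := by
    rw [Matrix.star_mulVec, hA'H, Matrix.dotProduct_mulVec]
  have hsS : star (S' *ᵥ z₂) ⬝ᵥ z₂ = star z₂ ⬝ᵥ (S' *ᵥ z₂) := by
    rw [Matrix.star_mulVec, hS'H, Matrix.dotProduct_mulVec]
  have hsmul1 : star (μ • z₁) ⬝ᵥ z₂ = (starRingEnd ℂ) μ * p := by
    rw [star_smul, smul_dotProduct]
    simp [hp, smul_eq_mul, Complex.star_def]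
  have hdsm : star z₁ ⬝ᵥ (μ • z₂) = μ * p := by
    rw [dotProduct_smul]
    simp [hp, smul_eq_mul]
  have key : star z₁ ⬝ᵥ (Q' *ᵥ z₁) + star z₂ ⬝ᵥ (S' *ᵥ z₂) = (μ + (starRingEnd ℂ) μ) * p := by
    have e1 : star z₁ ⬝ᵥ (Q' *ᵥ z₁)
        = μ * p + ((starRingEnd ℂ) μ * p - star z₂ ⬝ᵥ (S' *ᵥ z₂)) := by
      rw [h2', dotProduct_add, hdsm, ← hsA, h1', star_sub, sub_dotProduct,
        hsmul1, hsS]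
    rw [e1]; ring
  have hmu : μ + (starRingEnd ℂ) μ = 0 := by
    apply Complex.ext <;> simp [hre]
  rw [hmu, zero_mul] at key
  -- real parts
  have hQre : 0 ≤ (star z₁ ⬝ᵥ (Q' *ᵥ z₁)).re := re_quad_nonneg hQ.posSemidef z₁
  have hSform : star z₂ ⬝ᵥ (S' *ᵥ z₂)
      = star (B'ᵀ *ᵥ z₂) ⬝ᵥ (Rinv' *ᵥ (B'ᵀ *ᵥ z₂)) := by
    have hSdecomp : S' = B' * Rinv' * B'ᵀ := by
      rw [hS', Matrix.map_mul, Matrix.map_mul, Matrix.transpose_map]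
    have hBTH : (B'ᵀ)ᴴ = B' := by
      rw [hB', ← Matrix.transpose_map, conjTranspose_map_real, Matrix.transpose_transpose]
    rw [hSdecomp, ← Matrix.mulVec_mulVec, ← Matrix.mulVec_mulVec, Matrix.dotProduct_mulVec]
    congr 1
    rw [Matrix.star_mulVec, hBTH]
  have hSre : 0 ≤ (star z₂ ⬝ᵥ (S' *ᵥ z₂)).re := by
    rw [hSform]
    exact re_quad_nonneg (hR.inv.posSemidef) _
  have hkey_re : (star z₁ ⬝ᵥ (Q' *ᵥ z₁)).re + (star z₂ ⬝ᵥ (S' *ᵥ z₂)).re = 0 := by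
    have := congrArg Complex.re key
    simpa [Complex.add_re] using this
  -- z₁ = 0
  have hz₁0 : z₁ = 0 := by
    by_contra h
    have h5 : 0 < (star z₁ ⬝ᵥ (Q' *ᵥ z₁)).re := re_quad_pos hQ h
    linarith
  -- Bᵀ z₂ = 0
  have hw0 : B'ᵀ *ᵥ z₂ = 0 := by
    by_contra h
    have h' : 0 < (star (B'ᵀ *ᵥ z₂) ⬝ᵥ (Rinv' *ᵥ (B'ᵀ *ᵥ z₂))).re := re_quad_pos hR.inv h
    rw [← hSform] at h'
    linarith
  -- z₂ ≠ 0
  have hz₂ne : z₂ ≠ 0 := by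
    intro h
    apply hz
    rw [hzelim, hz₁0, h]
    funext s; cases s <;> rfl
  -- eigen equation for z₂
  have heig : z₂ ᵥ* A' = (-μ) • z₂ := by
    rw [← Matrix.mulVec_transpose]
    rw [hz₁0] at h2'
    simp only [Matrix.mulVec_zero] at h2'
    have h0 : (0 : Fin n → ℂ) = μ • z₂ + A'ᵀ *ᵥ z₂ := h2'
    have : A'ᵀ *ᵥ z₂ = -(μ • z₂) := by
      rw [eq_neg_iff_add_eq_zero, add_comm, ← h0]
    rw [this, neg_smul]
  have hBz : z₂ ᵥ* B' = 0 := by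
    rw [← Matrix.mulVec_transpose]; exact hw0
  -- powers
  have hpow : ∀ k : ℕ, z₂ ᵥ* (A' ^ k) = ((-μ) ^ k) • z₂ := by
    intro k
    induction k with
    | zero => simp [Matrix.vecMul_one]
    | succ k ih =>
      rw [pow_succ, ← Matrix.vecMul_vecMul, ih, Matrix.smul_vecMul, heig, smul_smul, pow_succ]
  have hKann : ∀ k : ℕ, z₂ ᵥ* (A' ^ k * B') = 0 := by
    intro k
    rw [← Matrix.vecMul_vecMul, hpow, Matrix.smul_vecMul, hBz, smul_zero]
  -- transfer to Kalman matrix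
  set K : Matrix (Fin n) (Fin n × Fin m) ℝ :=
    Matrix.of fun (i : Fin n) (kj : Fin n × Fin m) => ((A ^ (kj.1 : ℕ)) * B) i kj.2 with hK
  have hmapK : ∀ k : ℕ, A' ^ k * B' = ((A ^ k) * B).map (⇑Complex.ofRealHom) := by
    intro k
    rw [Matrix.map_mul]
    congr 1
    rw [hA', show (A.map (⇑Complex.ofRealHom)) = Complex.ofRealHom.mapMatrix A from rfl,
      show ((A ^ k).map (⇑Complex.ofRealHom)) = Complex.ofRealHom.mapMatrix (A ^ k) from rfl,
      map_pow]
  set a : Fin n → ℝ := fun i => (z₂ i).re with ha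
  set b : Fin n → ℝ := fun i => (z₂ i).im with hb
  have hKab : a ᵥ* K = 0 ∧ b ᵥ* K = 0 := by
    constructor <;>
    · funext kj
      obtain ⟨k, j⟩ := kj
      have hh := congrFun (hKann (k : ℕ)) j
      simp only [Matrix.vecMul, dotProduct, Pi.zero_apply, hmapK] at hh
      simp only [Matrix.vecMul, dotProduct, Pi.zero_apply]
      have hre' := congrArg Complex.re hh
      have him' := congrArg Complex.im hh
      rw [Complex.re_sum] at hre'
      rw [Complex.im_sum] at him'
      simp only [Complex.zero_re, Complex.zero_im] at hre' him'
      first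
      | · refine Eq.trans ?_ hre'
          refine Finset.sum_congr rfl fun x _ => ?_
          simp [ha, hK, Matrix.map_apply, Complex.mul_re]
      | · refine Eq.trans ?_ him'
          refine Finset.sum_congr rfl fun x _ => ?_
          simp [hb, hK, Matrix.map_apply, Complex.mul_im]
  -- rank argument
  have hrankT : Kᵀ.rank = n := by rw [Matrix.rank_transpose]; exact hKalman
  have hker : LinearMap.ker (Kᵀ.mulVecLin) = ⊥ := by
    have hrn := LinearMap.finrank_range_add_finrank_ker (Kᵀ.mulVecLin)
    have hdom : Module.finrank ℝ (Fin n → ℝ) = n := by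
      simp [Module.finrank_fintype_fun_eq_card]
    rw [hdom] at hrn
    have hrange : Module.finrank ℝ (LinearMap.range Kᵀ.mulVecLin) = n := hrankT
    rw [hrange] at hrn
    have h0 : Module.finrank ℝ (LinearMap.ker Kᵀ.mulVecLin) = 0 := by omega
    exact Submodule.finrank_eq_zero.mp h0
  have hker' : ∀ v : Fin n → ℝ, v ᵥ* K = 0 → v = 0 := by
    intro v hv
    have h1 : Kᵀ.mulVecLin v = 0 := by
      rw [Matrix.mulVecLin_apply, Matrix.mulVec_transpose, hv]
    have h2 := LinearMap.mem_ker.mpr h1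
    rw [hker, Submodule.mem_bot] at h2
    exact h2
  have ha0 : a = 0 := hker' a hKab.1
  have hb0 : b = 0 := hker' b hKab.2
  apply hz₂ne
  funext i
  exact Complex.ext (by simpa [ha] using congrFun ha0 i) (by simpa [hb] using congrFun hb0 i)
end

section
/- In the linear-quadratic problem with fixed endpoints where (A,B) satisfies the Kalman condition, every Pontryagin extremal is normal: if (x, p, p⁰, u) is an extremal with Hamiltonian H(x,p,p⁰,u) = ⟨p, Ax + Bu⟩ + p⁰((x−x̂)ᵀQ(x−x̂) + (u−û)ᵀR(u−û)), adjoint equation ṗ = −∂H/∂x, stationarity ∂H/∂u = 0, and (p(t), p⁰) ≠ (0,0), then p⁰ ≠ 0. -/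
open Matrix Set

/-- Auxiliary: a full-column-rank matrix has injective `mulVec`. -/
lemma aux_mulVec_inj {ι : Type*} [Fintype ι] {b : ℕ} (M : Matrix ι (Fin b) ℝ) (h : M.rank = b)
    (v : Fin b → ℝ) (hv : M *ᵥ v = 0) : v = 0 := by
  have hker : LinearMap.ker M.mulVecLin = ⊥ := by
    have h1 := LinearMap.finrank_range_add_finrank_ker M.mulVecLin
    rw [show (Module.finrank ℝ (Fin b → ℝ)) = b by simp, ← Matrix.rank, h] at h1
    have : Module.finrank ℝ (LinearMap.ker M.mulVecLin) = 0 := by omega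
    exact Submodule.finrank_eq_zero.mp this
  have : v ∈ LinearMap.ker M.mulVecLin := by simpa [Matrix.mulVecLin] using hv
  simpa [hker] using this

/-- Auxiliary: iterated differentiation of `Bᵀ (Aᵀ)^k p(t) = 0`. -/
lemma aux_iter {n m : ℕ} (A : Matrix (Fin n) (Fin n) ℝ) (B : Matrix (Fin n) (Fin m) ℝ)
    (T : ℝ) (p : ℝ → (Fin n → ℝ))
    (hadj : ∀ t ∈ Icc (0:ℝ) T, HasDerivAt p (-(Aᵀ *ᵥ p t)) t)
    (hstat : ∀ t ∈ Icc (0:ℝ) T, Bᵀ *ᵥ p t = 0) :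
    ∀ k : ℕ, ∀ t ∈ Ioo (0:ℝ) T, Bᵀ *ᵥ ((Aᵀ)^k *ᵥ p t) = 0 := by
  intro k
  induction k with
  | zero => intro t ht; simpa using hstat t (Ioo_subset_Icc_self ht)
  | succ k ih =>
    intro t ht
    -- f s = Bᵀ (Aᵀ)^k p s vanishes on Ioo, so its derivative at t is 0
    set L : (Fin n → ℝ) →ₗ[ℝ] (Fin m → ℝ) :=
      (Bᵀ * (Aᵀ)^k).mulVecLin with hL
    have hf : HasDerivAt (fun s => L (p s)) (L (-(Aᵀ *ᵥ p t))) t :=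
      (L.toContinuousLinearMap.hasFDerivAt).comp_hasDerivAt t
        (hadj t (Ioo_subset_Icc_self ht))
    have hzero : (fun s => L (p s)) =ᶠ[nhds t] (fun _ => (0 : Fin m → ℝ)) := by
      filter_upwards [Ioo_mem_nhds ht.1 ht.2] with s hs
      have := ih s hs
      simp only [hL, Matrix.mulVecLin_apply, ← Matrix.mulVec_mulVec]
      exact this
    have hf0 : HasDerivAt (fun s => L (p s)) 0 t :=
      (hasDerivAt_const t (0 : Fin m → ℝ)).congr_of_eventuallyEq hzero
    have heq : L (-(Aᵀ *ᵥ p t)) = 0 := hf.unique hf0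
    have : Bᵀ *ᵥ ((Aᵀ)^(k+1) *ᵥ p t) = - L (-(Aᵀ *ᵥ p t)) := by
      simp only [hL, Matrix.mulVecLin_apply, Matrix.mulVec_neg, neg_neg, pow_succ,
        Matrix.mulVec_mulVec]
      rw [Matrix.mul_assoc]
    rw [this, heq, neg_zero]

/-- **Normality of Pontryagin extremals in the LQ problem under Kalman's condition.**
For the LQ problem with Hamiltonian
`H(x,p,p⁰,u) = ⟨p, Ax + Bu⟩ + p⁰((x−x̂)ᵀQ(x−x̂) + (u−û)ᵀR(u−û))`,
if `(x, p, p⁰, u)` is an extremal (adjoint equation `ṗ = −∂H/∂x`, stationarity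
`∂H/∂u = 0`) which is nontrivial (`(p(t), p⁰) ≠ (0,0)` at some time), then `p⁰ ≠ 0`. -/
theorem lq_extremals_are_normal
    {n m : ℕ} (A : Matrix (Fin n) (Fin n) ℝ) (B : Matrix (Fin n) (Fin m) ℝ)
    (Q : Matrix (Fin n) (Fin n) ℝ) (R : Matrix (Fin m) (Fin m) ℝ)
    (hQ : Q.PosDef) (hR : R.PosDef)
    (hKalman : Matrix.rank (Matrix.of fun (i : Fin n) (kj : Fin n × Fin m) =>
        ((A ^ (kj.1 : ℕ)) * B) i kj.2) = n)
    (xhat : Fin n → ℝ) (uhat : Fin m → ℝ)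
    (T : ℝ) (hT : 0 < T)
    (x : ℝ → (Fin n → ℝ)) (u : ℝ → (Fin m → ℝ)) (p : ℝ → (Fin n → ℝ)) (p0 : ℝ)
    -- state equation ẋ = Ax + Bu
    (hstate : ∀ t ∈ Icc (0:ℝ) T, HasDerivAt x (A *ᵥ x t + B *ᵥ u t) t)
    -- adjoint equation ṗ = −∂H/∂x = −(Aᵀ p + 2 p⁰ Q (x − x̂))
    (hadj : ∀ t ∈ Icc (0:ℝ) T,
      HasDerivAt p (-(Aᵀ *ᵥ p t + (2 * p0) • (Q *ᵥ (x t - xhat)))) t)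
    -- stationarity ∂H/∂u = 0 : Bᵀ p + 2 p⁰ R (u − û) = 0
    (hstat : ∀ t ∈ Icc (0:ℝ) T, Bᵀ *ᵥ p t + (2 * p0) • (R *ᵥ (u t - uhat)) = 0)
    -- nontriviality (p(t), p⁰) ≠ (0,0)
    (hnontriv : ∀ t ∈ Icc (0:ℝ) T, p t ≠ 0 ∨ p0 ≠ 0) :
    p0 ≠ 0 := by
  intro hp0
  subst hp0
  have hadj' : ∀ t ∈ Icc (0:ℝ) T, HasDerivAt p (-(Aᵀ *ᵥ p t)) t := by
    intro t ht; simpa using hadj t ht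
  have hstat' : ∀ t ∈ Icc (0:ℝ) T, Bᵀ *ᵥ p t = 0 := by
    intro t ht; simpa using hstat t ht
  have hiter := aux_iter A B T p hadj' hstat'
  set t0 : ℝ := T / 2 with ht0
  have ht0mem : t0 ∈ Ioo (0:ℝ) T := ⟨by positivity, by linarith⟩
  set K : Matrix (Fin n) (Fin n × Fin m) ℝ :=
    Matrix.of fun (i : Fin n) (kj : Fin n × Fin m) => ((A ^ (kj.1 : ℕ)) * B) i kj.2 with hK
  have hKv : Kᵀ *ᵥ p t0 = 0 := by
    funext kj
    obtain ⟨k, j⟩ := kj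
    have h3 : (A ^ (k:ℕ) * B)ᵀ *ᵥ p t0 = 0 := by
      rw [Matrix.transpose_mul, Matrix.transpose_pow, ← Matrix.mulVec_mulVec]
      exact hiter k t0 ht0mem
    have h4 := congrFun h3 j
    simp only [Matrix.mulVec, dotProduct, Matrix.transpose_apply, Pi.zero_apply,
      hK, Matrix.of_apply, Matrix.transpose_apply] at h4 ⊢
    exact h4
  have hrankT : Kᵀ.rank = n := by rw [Matrix.rank_transpose]; exact hKalman
  have hp : p t0 = 0 := aux_mulVec_inj Kᵀ hrankT (p t0) hKv
  rcases hnontriv t0 (Ioo_subset_Icc_self ht0mem) with h | h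
  · exact h hp
  · exact h rfl
end

section
/- Without the convexity assumption (H4), the following chain of inequalities holds: inf{ z ∈ ℝ : 𝒲(t,x,z) ≤ 0 } ≤ 𝒱(t,x) ≤ inf{ z ∈ ℝ : 𝒲(t,x,z) < 0 }, where 𝒱 is the value of the state-constrained Bolza problem and 𝒲 is the auxiliary value function of the max-type penalized problem. -/
open Set MeasureTheory intervalIntegral

variable {d r mg mf : ℕ}

/-- Admissible control–trajectory pairs on `[t,T]` starting at `x₀` at time `t`. -/
def BolzaAdm (U : Set (Fin r → ℝ))
    (f : ℝ → EuclideanSpace ℝ (Fin d) → (Fin r → ℝ) → EuclideanSpace ℝ (Fin d))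
    (t T : ℝ) (x₀ : EuclideanSpace ℝ (Fin d))
    (traj : ℝ → EuclideanSpace ℝ (Fin d)) (u : ℝ → (Fin r → ℝ)) : Prop :=
  Measurable u ∧ (∀ s, u s ∈ U) ∧ traj t = x₀ ∧
    ∀ s ∈ Icc t T, traj s = x₀ + ∫ τ in t..s, f τ (traj τ) (u τ)

/-- Value function (in `EReal`, with `inf ∅ = +∞`) of the state-constrained Bolza
problem. -/
noncomputable def ConstrainedBolzaValue (U : Set (Fin r → ℝ))
    (f : ℝ → EuclideanSpace ℝ (Fin d) → (Fin r → ℝ) → EuclideanSpace ℝ (Fin d))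
    (l : ℝ → EuclideanSpace ℝ (Fin d) → (Fin r → ℝ) → ℝ)
    (φ : EuclideanSpace ℝ (Fin d) → ℝ)
    (g : EuclideanSpace ℝ (Fin d) → Fin mg → ℝ)
    (g_f : EuclideanSpace ℝ (Fin d) → Fin mf → ℝ)
    (T t : ℝ) (x : EuclideanSpace ℝ (Fin d)) : EReal :=
  sInf {c : EReal | ∃ traj u, BolzaAdm U f t T x traj u ∧
    (∀ s ∈ Icc t T, ∀ i, g (traj s) i ≤ 0) ∧ (∀ j, g_f (traj T) j ≤ 0) ∧
    c = ((φ (traj T) + ∫ s in t..T, l s (traj s) (u s) : ℝ) : EReal)}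

/-- Auxiliary (max-penalized) value function `𝒲(t,x,z)` on the augmented state space. -/
noncomputable def AuxValue (U : Set (Fin r → ℝ))
    (f : ℝ → EuclideanSpace ℝ (Fin d) → (Fin r → ℝ) → EuclideanSpace ℝ (Fin d))
    (l : ℝ → EuclideanSpace ℝ (Fin d) → (Fin r → ℝ) → ℝ)
    (φ : EuclideanSpace ℝ (Fin d) → ℝ)
    (g : EuclideanSpace ℝ (Fin d) → Fin mg → ℝ)
    (g_f : EuclideanSpace ℝ (Fin d) → Fin mf → ℝ)
    (T t : ℝ) (x : EuclideanSpace ℝ (Fin d)) (z : ℝ) : ℝ :=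
  sInf {c : ℝ | ∃ traj u, BolzaAdm U f t T x traj u ∧
    c = max (φ (traj T) + (∫ s in t..T, l s (traj s) (u s)) - z)
          (max (sSup ((fun θ => ⨆ i, g (traj θ) i) '' Icc t T))
               (⨆ j, g_f (traj T) j))}

private lemma real_sInf_nonpos_of_mem {S : Set ℝ} {c : ℝ} (hc : c ∈ S) (h : c ≤ 0) :
    sInf S ≤ 0 := by
  by_cases hb : BddBelow S
  · exact le_trans (csInf_le hb hc) h
  · rw [Real.sInf_of_not_bddBelow hb]

private lemma exists_lt_zero_of_sInf_lt_zero {S : Set ℝ} (h : sInf S < 0) :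
    ∃ c ∈ S, c < 0 := by
  rcases S.eq_empty_or_nonempty with rfl | hne
  · rw [Real.sInf_empty] at h; exact absurd h (lt_irrefl 0)
  · exact exists_lt_of_csInf_lt hne h

/-- **Two-sided estimate without the convexity assumption (H4).**
Under (H0)–(H3) only,
`inf{ z : 𝒲(t,x,z) ≤ 0 } ≤ 𝒱(t,x) ≤ inf{ z : 𝒲(t,x,z) < 0 }`. -/
theorem constrainedValue_between_auxValue_infima
    (T : ℝ) (hT : 0 < T)
    -- (H0)
    (U : Set (Fin r → ℝ)) (hUc : IsCompact U) (hUne : U.Nonempty)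
    (f : ℝ → EuclideanSpace ℝ (Fin d) → (Fin r → ℝ) → EuclideanSpace ℝ (Fin d))
    (l : ℝ → EuclideanSpace ℝ (Fin d) → (Fin r → ℝ) → ℝ)
    -- (H1a)
    (hf_cont : ContinuousOn (fun p : ℝ × EuclideanSpace ℝ (Fin d) × (Fin r → ℝ) =>
      f p.1 p.2.1 p.2.2) (Icc 0 T ×ˢ univ ×ˢ U))
    (hf_lip : ∀ R > (0:ℝ), ∃ k ≥ (0:ℝ), ∀ s ∈ Icc (0:ℝ) T, ∀ u ∈ U,
      ∀ x y : EuclideanSpace ℝ (Fin d), ‖x‖ ≤ R → ‖y‖ ≤ R →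
        ‖f s x u - f s y u‖ ≤ k * ‖x - y‖)
    (c_f : ℝ) (hc_f : 0 < c_f)
    (hf_growth : ∀ s ∈ Icc (0:ℝ) T, ∀ x, ∀ u ∈ U, ‖f s x u‖ ≤ c_f * (1 + ‖x‖))
    -- (H1b)
    (hl_cont : ContinuousOn (fun p : ℝ × EuclideanSpace ℝ (Fin d) × (Fin r → ℝ) =>
      l p.1 p.2.1 p.2.2) (Icc 0 T ×ˢ univ ×ˢ U))
    (hl_lip : ∀ R > (0:ℝ), ∃ k ≥ (0:ℝ), ∀ s ∈ Icc (0:ℝ) T, ∀ u ∈ U,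
      ∀ x y : EuclideanSpace ℝ (Fin d), ‖x‖ ≤ R → ‖y‖ ≤ R →
        |l s x u - l s y u| ≤ k * ‖x - y‖)
    (c_l : ℝ) (hc_l : 0 < c_l)
    (hl_growth : ∀ s ∈ Icc (0:ℝ) T, ∀ x, ∀ u ∈ U, |l s x u| ≤ c_l * (1 + ‖x‖))
    -- (H2)
    (φ : EuclideanSpace ℝ (Fin d) → ℝ) (hφ_lip : LocallyLipschitz φ)
    (c_φ : ℝ) (hc_φ : 0 ≤ c_φ) (hφ_growth : ∀ y, |φ y| ≤ c_φ * (1 + ‖y‖))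
    -- (H3)
    (g : EuclideanSpace ℝ (Fin d) → Fin mg → ℝ)
    (g_f : EuclideanSpace ℝ (Fin d) → Fin mf → ℝ)
    (hg_lip : LocallyLipschitz g) (hgf_lip : LocallyLipschitz g_f)
    (c_g : ℝ) (hc_g : 0 ≤ c_g)
    (hg_growth : ∀ y, ‖g y‖ + ‖g_f y‖ ≤ c_g * (1 + ‖y‖))
    (t : ℝ) (ht : t ∈ Icc 0 T) (x : EuclideanSpace ℝ (Fin d)) :
    sInf ((fun z : ℝ => (z : EReal)) '' {z : ℝ | AuxValue U f l φ g g_f T t x z ≤ 0})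
        ≤ ConstrainedBolzaValue U f l φ g g_f T t x
      ∧ ConstrainedBolzaValue U f l φ g g_f T t x
        ≤ sInf ((fun z : ℝ => (z : EReal)) '' {z : ℝ | AuxValue U f l φ g g_f T t x z < 0}) := by
  constructor
  · -- Left inequality
    refine le_sInf ?_
    rintro c ⟨traj, u, hadm, hg0, hgf0, rfl⟩
    set z : ℝ := φ (traj T) + ∫ s in t..T, l s (traj s) (u s) with hzdef
    have hmem : (max (φ (traj T) + (∫ s in t..T, l s (traj s) (u s)) - z)
          (max (sSup ((fun θ => ⨆ i, g (traj θ) i) '' Icc t T))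
               (⨆ j, g_f (traj T) j))) ∈
        {c : ℝ | ∃ traj u, BolzaAdm U f t T x traj u ∧
          c = max (φ (traj T) + (∫ s in t..T, l s (traj s) (u s)) - z)
                (max (sSup ((fun θ => ⨆ i, g (traj θ) i) '' Icc t T))
                     (⨆ j, g_f (traj T) j))} := ⟨traj, u, hadm, rfl⟩
    have hle : (max (φ (traj T) + (∫ s in t..T, l s (traj s) (u s)) - z)
          (max (sSup ((fun θ => ⨆ i, g (traj θ) i) '' Icc t T))
               (⨆ j, g_f (traj T) j))) ≤ 0 := by
      refine max_le ?_ (max_le ?_ ?_)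
      · rw [hzdef]; ring_nf; exact le_refl 0
      · apply Real.sSup_nonpos
        rintro v ⟨θ, hθ, rfl⟩
        exact Real.iSup_nonpos (fun i => hg0 θ hθ i)
      · exact Real.iSup_nonpos (fun j => hgf0 j)
    have hAz : AuxValue U f l φ g g_f T t x z ≤ 0 :=
      real_sInf_nonpos_of_mem hmem hle
    exact sInf_le (mem_image_of_mem _ hAz)
  · -- Right inequality
    refine le_sInf ?_
    rintro zE ⟨z, hz, rfl⟩
    obtain ⟨c, ⟨traj, u, hadm, rfl⟩, hc0⟩ := exists_lt_zero_of_sInf_lt_zero hz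
    have h1 : φ (traj T) + (∫ s in t..T, l s (traj s) (u s)) - z < 0 :=
      lt_of_le_of_lt (le_max_left _ _) hc0
    have hS : sSup ((fun θ => ⨆ i, g (traj θ) i) '' Icc t T) < 0 :=
      lt_of_le_of_lt (le_trans (le_max_left _ _) (le_max_right _ _)) hc0
    have hgf' : (⨆ j, g_f (traj T) j) < 0 :=
      lt_of_le_of_lt (le_trans (le_max_right _ _) (le_max_right _ _)) hc0
    have hgc : ∀ s ∈ Icc t T, ∀ i, g (traj s) i ≤ 0 := by
      intro s hs i
      have hsup : (⨆ i, g (traj s) i) ≤ 0 := by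
        by_cases hb : BddAbove ((fun θ => ⨆ i, g (traj θ) i) '' Icc t T)
        · exact le_of_lt (lt_of_le_of_lt (le_csSup hb ⟨s, hs, rfl⟩) hS)
        · rw [Real.sSup_of_not_bddAbove hb] at hS
          exact absurd hS (lt_irrefl 0)
      exact le_trans (le_ciSup (Finite.bddAbove_range _) i) hsup
    have hgfc : ∀ j, g_f (traj T) j ≤ 0 := fun j =>
      le_trans (le_ciSup (Finite.bddAbove_range _) j) (le_of_lt hgf')
    have hmem : ((φ (traj T) + ∫ s in t..T, l s (traj s) (u s) : ℝ) : EReal) ∈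
        {c : EReal | ∃ traj u, BolzaAdm U f t T x traj u ∧
          (∀ s ∈ Icc t T, ∀ i, g (traj s) i ≤ 0) ∧ (∀ j, g_f (traj T) j ≤ 0) ∧
          c = ((φ (traj T) + ∫ s in t..T, l s (traj s) (u s) : ℝ) : EReal)} :=
      ⟨traj, u, hadm, hgc, hgfc, rfl⟩
    refine le_trans (sInf_le hmem) ?_
    show ((φ (traj T) + ∫ s in t..T, l s (traj s) (u s) : ℝ) : EReal) ≤ (z : EReal)
    exact_mod_cast le_of_lt (by linarith : φ (traj T) + (∫ s in t..T, l s (traj s) (u s)) < z)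
end

section
/- In the optimistic planning framework, suppose that for the leaf node U_i containing an optimal control sequence one has J(x,z,u_i) − σ_i ≤ W(x,z) ≤ J(x,z,u_i), where u_i is the midpoint control sequence and σ_i ≤ δ_p := c₁ Δt M^{−p/N} for depth p. Then the output u_{i*} of the optimistic planning algorithm, which returns the leaf minimizing J(x,z,u_i), satisfies 0 ≤ J(x,z,u_{i*}) − W(x,z) ≤ δ_{p*}, where p* is the minimal depth of a leaf containing an optimal sequence; in particular if the maximal depth of expanded optimal leaves tends to infinity as the number of expanded nodes n → ∞, then J(x,z,u_{i*}) − W(x,z) → 0. -/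
open Filter

/-- **Near-optimality guarantee of the optimistic planning algorithm.**
Among the leaves of the planning tree there is a set `Opt` of leaves containing an
optimal control sequence, for which the two-sided bound
`J(u_i) − σ_i ≤ W ≤ J(u_i)` holds with `σ_i ≤ δ_{p_i} = c₁ Δt M^{−p_i/N}`.
If the algorithm returns a leaf `i*` minimizing `J` over all leaves, then
`0 ≤ J(u_{i*}) − W ≤ δ_{p*}` where `p*` is the minimal depth of a leaf in `Opt`;
moreover `δ_p → 0` as `p → ∞`. -/
theorem optimistic_planning_error_bound
    {ι : Type*} [Fintype ι] [Nonempty ι]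
    (N : ℕ) (hN : 2 ≤ N) (M : ℝ) (hM : 1 < M) (Δt : ℝ) (hΔt : 0 < Δt)
    (c₁ : ℝ) (hc₁ : 0 < c₁)
    (J σ : ι → ℝ) (depth : ι → ℕ) (W : ℝ)
    (δ : ℕ → ℝ) (hδ : ∀ p, δ p = c₁ * Δt * M ^ (-(p : ℝ) / N))
    (Opt : Set ι) (hOptne : Opt.Nonempty)
    (hOpt : ∀ i ∈ Opt, J i - σ i ≤ W ∧ W ≤ J i)
    (hσ : ∀ i ∈ Opt, σ i ≤ δ (depth i))
    (hW : ∀ i, W ≤ J i)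
    (istar : ι) (histar : ∀ i, J istar ≤ J i)
    (i₀ : ι) (hi₀ : i₀ ∈ Opt) (hi₀min : ∀ j ∈ Opt, depth i₀ ≤ depth j) :
    (0 ≤ J istar - W ∧ J istar - W ≤ δ (depth i₀))
    ∧ Tendsto δ atTop (nhds 0) := by
  refine ⟨⟨by linarith [hW istar], ?_⟩, ?_⟩
  · have h1 := (hOpt i₀ hi₀).1
    have h2 := hσ i₀ hi₀
    have h3 := histar i₀
    linarith
  · have hcomp : Tendsto (fun p : ℕ => -(p : ℝ) / N) atTop atBot := by
      have hN0 : (0 : ℝ) < N := by positivity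
      apply Tendsto.atBot_div_const hN0
      exact tendsto_neg_atBot_iff.mpr tendsto_natCast_atTop_atTop
    have := ((tendsto_rpow_atBot_of_base_gt_one M hM).comp hcomp).const_mul (c₁ * Δt)
    rw [mul_zero] at this
    refine this.congr fun p => ?_
    rw [hδ p]; rfl
end
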